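/- Let Φ = ∃A∀B φ₀ be a closed QBF and suppose X = 0 is a cause of ψ in the reduction model (M_Φ, u), witnessed by a partition (Z,W) of the endogenous variables and a setting w' of W satisfying AC2, where W is minimal (no partition with a proper subset of W in place of W satisfies AC2 with some setting). Then: W ∩ B = ∅ (hence W ⊆ A ∪ {C}), C ∈ W, every variable of W is set to 1 in w', and the truth assignment to A that makes exactly the variables of W ∩ A true is a witness for Φ. -/

import Mathlib

open Classical

/-- A causal model over exogenous variables `U` and endogenous variables `V`,
with integer-valued variables.  `Rexo Y` / `R X` are the (intended) ranges of
the variables, and `F X` is the structural equation for the endogenous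
variable `X`, giving its value as a function of the values of all other
variables. -/
structure CausalModel (U V : Type) where
  Rexo : U → Set ℤ
  R : V → Set ℤ
  F : V → (U → ℤ) → (V → ℤ) → ℤ

namespace CausalModel

variable {U V : Type}

/-- A causal model is recursive if the variables can be ordered so that each
structural equation depends only on the values of strictly earlier endogenous
variables (equivalently, the dependency graph is acyclic). -/
def Recursive (M : CausalModel U V) : Prop :=
  ∃ ord : V → ℕ, ∀ (X : V) (u : U → ℤ) (g g' : V → ℤ),
    (∀ Y, ord Y < ord X → g Y = g' Y) → M.F X u g = M.F X u g'

/-- `s` simultaneously satisfies all the structural equations in context `u`. -/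
def IsSolution (M : CausalModel U V) (u : U → ℤ) (s : V → ℤ) : Prop :=
  ∀ X, s X = M.F X u s

/-- The (unique, for recursive models) solution of the equations in context `u`. -/
noncomputable def solution (M : CausalModel U V) (u : U → ℤ) : V → ℤ :=
  Classical.epsilon fun s => M.IsSolution u s

/-- The model `M_{A ← y}` obtained by replacing the equations of the variables
in `A` by the constant values given by `y`. -/
noncomputable def intervene (M : CausalModel U V) (A : Set V) (y : V → ℤ) :
    CausalModel U V where
  Rexo := M.Rexo
  R := M.R
  F := fun X u g => if X ∈ A then y X else M.F X u g

end CausalModel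

/-- Boolean combinations of primitive events `X = x`. -/
inductive CausalFormula (V : Type) where
  | tru : CausalFormula V
  | eq : V → ℤ → CausalFormula V
  | not : CausalFormula V → CausalFormula V
  | and : CausalFormula V → CausalFormula V → CausalFormula V
  | or : CausalFormula V → CausalFormula V → CausalFormula V
  | iff : CausalFormula V → CausalFormula V → CausalFormula V

/-- Truth of a causal formula under an assignment to the endogenous variables. -/
def CausalFormula.holds {V : Type} (s : V → ℤ) : CausalFormula V → Prop
  | tru => True
  | eq X x => s X = x
  | not φ => ¬ φ.holds s
  | and φ χ => φ.holds s ∧ χ.holds s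
  | or φ χ => φ.holds s ∨ χ.holds s
  | iff φ χ => φ.holds s ↔ χ.holds s

/-- `(M,u) ⊨ [A ← y] φ` : `φ` holds in the unique solution of `M_{A ← y}` in
context `u`. -/
def sat {U V : Type} (M : CausalModel U V) (u : U → ℤ) (A : Set V) (y : V → ℤ)
    (φ : CausalFormula V) : Prop :=
  φ.holds ((M.intervene A y).solution u)

/-- Condition AC2 of the Halpern–Pearl definition of causality, for the single
conjunct `X = x`, witnessed by the partition `(Wᶜ, W)` (so `Z = Wᶜ ∋ X`) and
the setting `(x', w')` of `(X, W)`. -/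
def AC2 {U V : Type} (M : CausalModel U V) (u : U → ℤ) (X : V) (x : ℤ)
    (φ : CausalFormula V) (W : Set V) (x' : ℤ) (w' : V → ℤ) : Prop :=
  X ∉ W ∧ x' ∈ M.R X ∧ (∀ Y ∈ W, w' Y ∈ M.R Y) ∧
  -- AC2(a): (M,u) ⊨ [X ← x', W ← w'] ¬φ
  ¬ sat M u (insert X W) (fun Y => if Y = X then x' else w' Y) φ ∧
  -- AC2(b): (M,u) ⊨ [X ← x, W ← w', Z' ← z*] φ for all subsets Z' of Z = Wᶜ
  ∀ Z' : Set V, Z' ⊆ Wᶜ →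
    sat M u (insert X (W ∪ Z'))
      (fun Y => if Y = X then x else if Y ∈ W then w' Y else M.solution u Y) φ

/-- `X = x` is a cause of `φ` in `(M,u)`: AC1 together with AC2 (AC3 is
automatic for single conjuncts). -/
def IsCause {U V : Type} (M : CausalModel U V) (u : U → ℤ) (X : V) (x : ℤ)
    (φ : CausalFormula V) : Prop :=
  (M.solution u X = x ∧ φ.holds (M.solution u)) ∧
  ∃ W x' w', AC2 M u X x φ W x' w'

/-- The degree of responsibility of `X = x` for `φ` in `(M,u)` : `0` if
`X = x` is not a cause of `φ`, and otherwise `1/(k+1)` where `k` is the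
minimal, over all AC2 witnesses, number of variables of `W` whose value in
`w'` differs from their value in the unique solution of `(M,u)`. -/
noncomputable def dr {U V : Type} (M : CausalModel U V) (u : U → ℤ) (X : V)
    (x : ℤ) (φ : CausalFormula V) : ℚ :=
  if IsCause M u X x φ then
    1 / ((sInf {k : ℕ | ∃ W x' w', AC2 M u X x φ W x' w' ∧
        {Y | Y ∈ W ∧ w' Y ≠ M.solution u Y}.ncard = k} : ℕ) + 1 : ℚ)
  else 0
open Classical

/-- Propositional formulas over variables of type `α`. -/
inductive PropForm (α : Type) where
  | tru : PropForm α
  | var : α → PropForm α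
  | not : PropForm α → PropForm α
  | and : PropForm α → PropForm α → PropForm α
  | or : PropForm α → PropForm α → PropForm α
  | iff : PropForm α → PropForm α → PropForm α

/-- Evaluation of a propositional formula under a truth assignment. -/
def PropForm.eval {α : Type} (g : α → Bool) : PropForm α → Bool
  | tru => true
  | var v => g v
  | not φ => !(φ.eval g)
  | and φ χ => φ.eval g && χ.eval g
  | or φ χ => φ.eval g || χ.eval g
  | iff φ χ => φ.eval g == χ.eval g

/-- The set of propositional variables occurring in a formula. -/
def PropForm.vars {α : Type} [DecidableEq α] : PropForm α → Finset α
  | tru => ∅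
  | var v => {v}
  | not φ => φ.vars
  | and φ χ => φ.vars ∪ χ.vars
  | or φ χ => φ.vars ∪ χ.vars
  | iff φ χ => φ.vars ∪ χ.vars

/-- Replace every propositional variable by its negation. -/
def PropForm.negVars {α : Type} : PropForm α → PropForm α
  | tru => tru
  | var v => .not (.var v)
  | not φ => .not φ.negVars
  | and φ χ => .and φ.negVars χ.negVars
  | or φ χ => .or φ.negVars χ.negVars
  | iff φ χ => .iff φ.negVars χ.negVars

/-- Conjunction of a list of propositional formulas. -/
def PropForm.bigAnd {α : Type} (l : List (PropForm α)) : PropForm α :=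
  l.foldr .and .tru

/-- `f` is a witness for the closed QBF `∃X ∀Y ψ` : `ψ` evaluates to true
under `f` (on `X`) combined with every truth assignment to the remaining
variables. -/
def IsWitness {α : Type} [DecidableEq α] (X : Finset α) (ψ : PropForm α)
    (f : α → Bool) : Prop :=
  ∀ g : α → Bool, (∀ v ∈ X, g v = f v) → ψ.eval g = true

/-- `MAXQSAT₂(∃X∀Y ψ)` : the maximal number of variables of `X` assigned true
by some witness, or `-1` if there is no witness. -/
noncomputable def MAXQSAT2 {α : Type} [DecidableEq α] (X : Finset α)
    (ψ : PropForm α) : ℤ :=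
  if ∃ f, IsWitness X ψ f then
    sSup {k : ℤ | ∃ f, IsWitness X ψ f ∧
      ((X.filter fun v => f v = true).card : ℤ) = k}
  else -1

/-- `MINQSAT₂(∃X∀Y ψ)` : the minimal number of variables of `X` assigned true
by some witness, or `|X| + 1` if there is no witness. -/
noncomputable def MINQSAT2 {α : Type} [DecidableEq α] (X : Finset α)
    (ψ : PropForm α) : ℤ :=
  if ∃ f, IsWitness X ψ f then
    sInf {k : ℤ | ∃ f, IsWitness X ψ f ∧
      ((X.filter fun v => f v = true).card : ℤ) = k}
  else X.card + 1

/-- `SUBSET_MAXQSAT₂(∃X∀Y ψ, Z)` : the maximal number of variables of `Z`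
assigned true by some witness, or `-1` if there is no witness. -/
noncomputable def SUBSET_MAXQSAT2 {α : Type} [DecidableEq α] (X Z : Finset α)
    (ψ : PropForm α) : ℤ :=
  if ∃ f, IsWitness X ψ f then
    sSup {k : ℤ | ∃ f, IsWitness X ψ f ∧
      ((Z.filter fun v => f v = true).card : ℤ) = k}
  else -1

/-- Conjunction of a list of causal formulas. -/
def CausalFormula.bigAnd {V : Type} (l : List (CausalFormula V)) :
    CausalFormula V :=
  l.foldr .and .tru

/-- Disjunction of a list of causal formulas. -/
def CausalFormula.bigOr {V : Type} (l : List (CausalFormula V)) :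
    CausalFormula V :=
  l.foldr .or (.not .tru)

/-- Translate a propositional formula into a causal formula by replacing each
propositional variable `S` by the primitive event `S = 1`. -/
def PropForm.toCausal {Var : Type} : PropForm Var → CausalFormula (Var ⊕ Bool)
  | .tru => .tru
  | .var v => .eq (Sum.inl v) 1
  | .not φ => .not φ.toCausal
  | .and φ χ => .and φ.toCausal χ.toCausal
  | .or φ χ => .or φ.toCausal χ.toCausal
  | .iff φ χ => .iff φ.toCausal χ.toCausal

/-- In the reduction model, the endogenous variables are the propositional
variables `A ∪ B` (as `Sum.inl`) together with `C := Sum.inr false` and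
`X := Sum.inr true`.  The exogenous part is a single variable `E`.  Each
variable in `A ∪ {C, X}` has range `{0,1}`, each variable in `B` has range
`{0,1,2}`; the equation of each `S ∈ B` is `F_S = C + X`, and the equation of
every other endogenous variable is `F = 0`. -/
def redModel {Var : Type} [DecidableEq Var] (B : Finset Var) :
    CausalModel Unit (Var ⊕ Bool) where
  Rexo := fun _ => {0}
  R := fun v =>
    match v with
    | Sum.inl s => if s ∈ B then ({0, 1, 2} : Set ℤ) else ({0, 1} : Set ℤ)
    | Sum.inr _ => {0, 1}
  F := fun v _ g =>
    match v with
    | Sum.inl s =>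
        if s ∈ B then g (Sum.inr false) + g (Sum.inr true) else 0
    | Sum.inr _ => 0

/-- The formula
`ψ = (φ₀' ∧ ⋀_{S∈B} S ≠ 2) ∨ (C = 0) ∨ ((X = 1) ∧ (C = 1) ∧ ⋁_{S∈B} S ≠ 2)`,
where `φ₀'` is `φ₀` with every propositional variable `S` replaced by the
primitive event `S = 1`. -/
noncomputable def redPsi {Var : Type} [DecidableEq Var] (B : Finset Var)
    (φ₀ : PropForm Var) : CausalFormula (Var ⊕ Bool) :=
  .or
    (.and φ₀.toCausal
      (CausalFormula.bigAnd (B.toList.map fun s => .not (.eq (Sum.inl s) 2))))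
    (.or (.eq (Sum.inr false) 0)
      (.and (.eq (Sum.inr true) 1)
        (.and (.eq (Sum.inr false) 1)
          (CausalFormula.bigOr
            (B.toList.map fun s => .not (.eq (Sum.inl s) 2))))))

/-- The context setting the single exogenous variable `E` to `0`. -/
def redCtx : Unit → ℤ := fun _ => 0

/-!
Every intervention on the reduction model has an explicit solution: intervened variables take
their set values, a variable of `B` that is not intervened on takes the value `C + X`, and every
other variable is `0`. If `x' = 0`, AC2(a) and AC2(b) with `Z' = ∅` describe the same
intervention, so `x' = 1`. AC2(a) then forces `C ∈ W` with `w' C = 1` and every variable of `B`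
to the value `2`, while AC2(b) with `Z' = ∅`, where `X = 0`, forbids any value `2` in `B`;
hence `W` misses `B`. A variable of `A` in `W` that is set to its actual value `0` can be
dropped from `W` without affecting AC2, so minimality gives `w' = 1` on `W`. Finally, given an
assignment `g` to `B`, take for `Z'` the variables of `B` that `g` makes false: they keep their
actual value `0`, the other variables of `B` take `C + X = 1`, and `ψ` reduces to `φ₀` evaluated
at `g` together with the assignment making exactly `W ∩ A` true.
-/
namespace CausalModel

variable {U V : Type}

theorem intervene_congr (M : CausalModel U V) {A : Set V} {y y' : V → ℤ}
    (h : ∀ X ∈ A, y X = y' X) : M.intervene A y = M.intervene A y' := by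
  simp only [intervene, mk.injEq, true_and]
  funext X u g
  split_ifs with hX
  · exact h X hX
  · rfl

theorem intervene_empty (M : CausalModel U V) (y : V → ℤ) : M.intervene ∅ y = M := by
  simp [intervene]

theorem solution_eq_of_unique {M : CausalModel U V} {u : U → ℤ} {s : V → ℤ}
    (hs : M.IsSolution u s) (huniq : ∀ g, M.IsSolution u g → g = s) : M.solution u = s :=
  huniq _ (Classical.epsilon_spec ⟨s, hs⟩)

end CausalModel

theorem AC2.setting_ne {U V : Type} {M : CausalModel U V} {u : U → ℤ} {X : V} {x x' : ℤ}
    {φ : CausalFormula V} {W : Set V} {w' : V → ℤ} (h : AC2 M u X x φ W x' w') : x' ≠ x := by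
  rintro rfl
  obtain ⟨hXW, -, -, ha, hb⟩ := h
  refine ha ?_
  have hb₀ := hb ∅ (Set.empty_subset _)
  rw [Set.union_empty] at hb₀
  rwa [sat, M.intervene_congr]
  rintro Y (rfl | hY)
  · simp
  · have hYX : Y ≠ X := ne_of_mem_of_not_mem hY hXW
    simp [hYX, hY]

theorem CausalFormula.holds_bigAnd {V : Type} (s : V → ℤ) (l : List (CausalFormula V)) :
    (bigAnd l).holds s ↔ ∀ φ ∈ l, φ.holds s := by
  induction l with
  | nil => simp [bigAnd, holds]
  | cons a l ih => simp [bigAnd, holds, ← ih]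

theorem CausalFormula.holds_bigOr {V : Type} (s : V → ℤ) (l : List (CausalFormula V)) :
    (bigOr l).holds s ↔ ∃ φ ∈ l, φ.holds s := by
  induction l with
  | nil => simp [bigOr, holds]
  | cons a l ih => simp [bigOr, holds, ← ih]

theorem PropForm.holds_toCausal {Var : Type} (φ : PropForm Var) (s : Var ⊕ Bool → ℤ) :
    φ.toCausal.holds s ↔ φ.eval (fun v => decide (s (.inl v) = 1)) = true := by
  induction φ with
  | tru | var v => simp [toCausal, CausalFormula.holds, eval]
  | not φ ih => simp [toCausal, CausalFormula.holds, eval, ih]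
  | and φ χ ih ih' | or φ χ ih ih' => simp [toCausal, CausalFormula.holds, eval, ih, ih']
  | iff φ χ ih ih' =>
    simp only [toCausal, CausalFormula.holds, eval, ih, ih', beq_iff_eq]
    exact Bool.eq_iff_iff.symm

namespace redModel

variable {Var : Type} [DecidableEq Var] (B : Finset Var)

noncomputable def interventionSolution (I : Set (Var ⊕ Bool)) (y : Var ⊕ Bool → ℤ) :
    Var ⊕ Bool → ℤ
  | .inl s =>
    if s ∈ B ∧ .inl s ∉ I then I.indicator y (.inr false) + I.indicator y (.inr true)
    else I.indicator y (.inl s)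
  | .inr b => I.indicator y (.inr b)

theorem isSolution_intervene_iff (I : Set (Var ⊕ Bool)) (y : Var ⊕ Bool → ℤ)
    (g : Var ⊕ Bool → ℤ) :
    ((redModel B).intervene I y).IsSolution redCtx g ↔ g = interventionSolution B I y := by
  have hinr : ∀ b, ((redModel B).intervene I y).F (.inr b) redCtx g = I.indicator y (.inr b) := by
    intro b; simp [CausalModel.intervene, redModel, Set.indicator]
  constructor
  · intro hg
    funext v
    rcases v with s | b
    · have hC := (hg (.inr false)).trans (hinr false)
      have hX := (hg (.inr true)).trans (hinr true)
      rw [hg]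
      by_cases hs : Sum.inl s ∈ I <;> by_cases hB : s ∈ B <;>
        simp [CausalModel.intervene, redModel, interventionSolution, Set.indicator, hs, hB, hC, hX]
    · rw [hg, hinr]; rfl
  · rintro rfl (s | b)
    · by_cases hs : Sum.inl s ∈ I <;> by_cases hB : s ∈ B <;>
        simp [CausalModel.intervene, redModel, interventionSolution, Set.indicator, hs, hB]
    · rw [hinr]; rfl

theorem solution_intervene (I : Set (Var ⊕ Bool)) (y : Var ⊕ Bool → ℤ) :
    ((redModel B).intervene I y).solution redCtx = interventionSolution B I y :=
  CausalModel.solution_eq_of_unique ((isSolution_intervene_iff B I y _).2 rfl)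
    fun g => (isSolution_intervene_iff B I y g).1

theorem solution_eq_zero : (redModel B).solution redCtx = 0 := by
  rw [← (redModel B).intervene_empty 0, solution_intervene]
  funext v
  rcases v with s | b <;> simp [interventionSolution]

theorem sat_iff (I : Set (Var ⊕ Bool)) (y : Var ⊕ Bool → ℤ) (φ : CausalFormula (Var ⊕ Bool)) :
    sat (redModel B) redCtx I y φ ↔ φ.holds (interventionSolution B I y) := by
  rw [sat, solution_intervene]

theorem interventionSolution_congr {I₁ I₂ : Set (Var ⊕ Bool)} {y₁ y₂ : Var ⊕ Bool → ℤ}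
    (hy : I₁.indicator y₁ = I₂.indicator y₂) (hB : ∀ s ∈ B, Sum.inl s ∈ I₁ ↔ Sum.inl s ∈ I₂) :
    interventionSolution B I₁ y₁ = interventionSolution B I₂ y₂ := by
  funext v
  rcases v with s | b
  · by_cases hs : s ∈ B <;> simp [interventionSolution, hy, hs, hB]
  · simp [interventionSolution, hy]

theorem holds_redPsi_iff (φ₀ : PropForm Var) (s : Var ⊕ Bool → ℤ) :
    (redPsi B φ₀).holds s ↔
      (φ₀.eval (fun v => decide (s (.inl v) = 1)) = true ∧ ∀ b ∈ B, s (.inl b) ≠ 2) ∨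
        s (.inr false) = 0 ∨
        (s (.inr true) = 1 ∧ s (.inr false) = 1 ∧ ∃ b ∈ B, s (.inl b) ≠ 2) := by
  simp [redPsi, CausalFormula.holds, CausalFormula.holds_bigAnd, CausalFormula.holds_bigOr,
    PropForm.holds_toCausal]

variable {B} {φ₀ : PropForm Var} {W : Set (Var ⊕ Bool)} {x' : ℤ} {w' : Var ⊕ Bool → ℤ}

variable (B) in
theorem ac2_iff : AC2 (redModel B) redCtx (.inr true) 0 (redPsi B φ₀) W x' w' ↔
    .inr true ∉ W ∧ x' ∈ (redModel B).R (.inr true) ∧ (∀ Y ∈ W, w' Y ∈ (redModel B).R Y) ∧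
    ¬ (redPsi B φ₀).holds (interventionSolution B (insert (.inr true) W)
        (fun Y => if Y = .inr true then x' else w' Y)) ∧
    ∀ Z' ⊆ Wᶜ, (redPsi B φ₀).holds (interventionSolution B (insert (.inr true) (W ∪ Z'))
        (fun Y => if Y = .inr true then 0 else if Y ∈ W then w' Y else 0)) := by
  simp only [AC2, sat_iff, solution_eq_zero, Pi.zero_apply]
  congr!

theorem mem_R_inl_of_notMem {s : Var} (hs : s ∉ B) {z : ℤ} (hz : z ∈ (redModel B).R (.inl s)) :
    z = 0 ∨ z = 1 := by
  simpa [redModel, hs] using hz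

theorem mem_R_inr {b : Bool} {z : ℤ} (hz : z ∈ (redModel B).R (.inr b)) : z = 0 ∨ z = 1 := by
  simpa [redModel] using hz

theorem ac2_x'_eq_one (h : AC2 (redModel B) redCtx (.inr true) 0 (redPsi B φ₀) W x' w') :
    x' = 1 :=
  (mem_R_inr h.2.1).resolve_left h.setting_ne

theorem ac2_C_mem_and_eq_one (h : AC2 (redModel B) redCtx (.inr true) 0 (redPsi B φ₀) W x' w') :
    .inr false ∈ W ∧ w' (.inr false) = 1 := by
  obtain ⟨-, -, hR, ha, -⟩ := (ac2_iff B).1 h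
  have hC : .inr false ∈ W ∧ w' (.inr false) ≠ 0 := by
    by_contra hC
    refine ha ((holds_redPsi_iff B φ₀ _).2 (Or.inr (Or.inl ?_)))
    simp only [interventionSolution, Set.indicator, Set.mem_insert_iff]
    grind
  exact ⟨hC.1, (mem_R_inr (hR _ hC.1)).resolve_left hC.2⟩

theorem ac2_B_value_eq_two (h : AC2 (redModel B) redCtx (.inr true) 0 (redPsi B φ₀) W x' w') :
    ∀ b ∈ B, .inl b ∈ W → w' (.inl b) = 2 := by
  obtain ⟨hCW, hC⟩ := ac2_C_mem_and_eq_one h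
  obtain rfl := ac2_x'_eq_one h
  obtain ⟨-, -, -, ha, -⟩ := (ac2_iff B).1 h
  intro b hb hbW
  by_contra hb2
  refine ha ((holds_redPsi_iff B φ₀ _).2 (Or.inr (Or.inr ⟨?_, ?_, b, hb, ?_⟩))) <;>
    simp [interventionSolution, Set.indicator, hCW, hC, hbW, hb2]

theorem ac2_inl_notMem (h : AC2 (redModel B) redCtx (.inr true) 0 (redPsi B φ₀) W x' w') :
    ∀ b ∈ B, .inl b ∉ W := by
  obtain ⟨hCW, hC⟩ := ac2_C_mem_and_eq_one h
  obtain ⟨-, -, -, -, hb⟩ := (ac2_iff B).1 h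
  intro b hbB hbW
  rcases (holds_redPsi_iff B φ₀ _).1 (hb ∅ (Set.empty_subset _)) with ⟨-, hne⟩ | hC0 | ⟨hX1, -⟩
  · exact hne b hbB (by
      simp [interventionSolution, Set.indicator, hbW, ac2_B_value_eq_two h b hbB hbW])
  · simp [interventionSolution, Set.indicator, hCW, hC] at hC0
  · simp [interventionSolution, Set.indicator] at hX1

theorem ac2_diff_singleton (h : AC2 (redModel B) redCtx (.inr true) 0 (redPsi B φ₀) W x' w')
    {v : Var} (hv : v ∉ B) (hw' : w' (.inl v) = 0) :
    AC2 (redModel B) redCtx (.inr true) 0 (redPsi B φ₀) (W \ {.inl v}) x' w' := by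
  obtain ⟨hXW, hx', hR, ha, hb⟩ := (ac2_iff B).1 h
  have hBv : ∀ s ∈ B, Sum.inl s ≠ (Sum.inl v : Var ⊕ Bool) := by
    rintro s hs ⟨⟩; exact hv hs
  refine (ac2_iff B).2 ⟨fun hX => hXW hX.1, hx', fun Y hY => hR Y hY.1, ?_, fun Z' hZ' => ?_⟩
  · convert ha using 2
    refine interventionSolution_congr B ?_ fun s hs => by simp [hBv s hs]
    funext Y
    by_cases hY : Y = .inl v
    · subst hY; simp [Set.indicator, hw']
    · simp [Set.indicator, hY]
  · have hZ'v : Z' \ {.inl v} ⊆ Wᶜ := fun Y hY hYW => hZ' hY.1 ⟨hYW, hY.2⟩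
    refine (congrArg (CausalFormula.holds · (redPsi B φ₀)) ?_).mpr (hb _ hZ'v)
    refine interventionSolution_congr B ?_ fun s hs => by simp [hBv s hs]
    funext Y
    by_cases hY : Y = .inl v
    · subst hY; simp [Set.indicator, hw']
    · simp [Set.indicator, hY]

theorem ac2_isWitness [Fintype Var] {A : Finset Var} (hcover : A ∪ B = Finset.univ)
    (h : AC2 (redModel B) redCtx (.inr true) 0 (redPsi B φ₀) W x' w')
    (hw' : ∀ Y ∈ W, w' Y = 1) : IsWitness A φ₀ (fun v => decide (.inl v ∈ W)) := by
  obtain ⟨hCW, hC⟩ := ac2_C_mem_and_eq_one h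
  have hBW := ac2_inl_notMem h
  obtain ⟨-, -, -, -, hb⟩ := (ac2_iff B).1 h
  intro g hg
  have hZ' : Sum.inl '' {t | t ∈ B ∧ g t = false} ⊆ Wᶜ := by
    rintro _ ⟨t, ⟨ht, -⟩, rfl⟩
    exact hBW t ht
  rcases (holds_redPsi_iff B φ₀ _).1 (hb _ hZ') with ⟨hφ, -⟩ | hC0 | ⟨hX1, -⟩
  · convert hφ using 2
    funext v
    by_cases hvB : v ∈ B
    · cases hgv : g v <;> simp [interventionSolution, Set.indicator, hvB, hgv, hBW v hvB, hCW, hC]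
    · have hvA : v ∈ A := (Finset.mem_union.1 (hcover ▸ Finset.mem_univ v)).resolve_right hvB
      rw [hg v hvA]
      by_cases hvW : Sum.inl v ∈ W
      · simp [interventionSolution, Set.indicator, hvB, hvW, hw' _ hvW]
      · simp [interventionSolution, Set.indicator, hvB, hvW]
  · simp [interventionSolution, Set.indicator, hCW, hC] at hC0
  · simp [interventionSolution, Set.indicator] at hX1

end redModel

theorem redModel_minimal_witness_structure_general {Var : Type} [Fintype Var]
    [DecidableEq Var]
    (A B : Finset Var) (hcover : A ∪ B = Finset.univ)
    (φ₀ : PropForm Var)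
    (W : Set (Var ⊕ Bool)) (x' : ℤ) (w' : (Var ⊕ Bool) → ℤ)
    (hAC2 : AC2 (redModel B) redCtx (Sum.inr true) 0 (redPsi B φ₀) W x' w')
    (hmin : ∀ W₀ : Set (Var ⊕ Bool), W₀ ⊂ W →
      ¬ ∃ x'' w'', AC2 (redModel B) redCtx (Sum.inr true) 0 (redPsi B φ₀) W₀ x'' w'') :
    (∀ s ∈ B, Sum.inl s ∉ W) ∧
    (W ⊆ {Y | (∃ v ∈ A, Y = Sum.inl v) ∨ Y = Sum.inr false}) ∧
    Sum.inr false ∈ W ∧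
    (∀ Y ∈ W, w' Y = 1) ∧
    (∃ f : Var → Bool, (∀ v : Var, f v = true ↔ Sum.inl v ∈ W) ∧
      IsWitness A φ₀ f) := by
  obtain ⟨hCW, hC⟩ := redModel.ac2_C_mem_and_eq_one hAC2
  have hBW := redModel.ac2_inl_notMem hAC2
  have hWsub : W ⊆ {Y | (∃ v ∈ A, Y = Sum.inl v) ∨ Y = Sum.inr false} := by
    rintro (v | b) hY
    · have hvB : v ∉ B := fun hvB => hBW v hvB hY
      exact Or.inl ⟨v, (Finset.mem_union.1 (hcover ▸ Finset.mem_univ v)).resolve_right hvB, rfl⟩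
    · cases b
      · exact Or.inr rfl
      · exact absurd hY hAC2.1
  have hW1 : ∀ Y ∈ W, w' Y = 1 := by
    rintro Y hY
    rcases hWsub hY with ⟨v, -, rfl⟩ | rfl
    · have hvB : v ∉ B := fun hvB => hBW v hvB hY
      refine (redModel.mem_R_inl_of_notMem hvB (hAC2.2.2.1 _ hY)).resolve_left fun hv0 => ?_
      exact hmin _ (Set.sdiff_singleton_ssubset.2 hY) ⟨x', w', redModel.ac2_diff_singleton hAC2 hvB hv0⟩
    · exact hC
  exact ⟨hBW, hWsub, hCW, hW1, _, fun v => decide_eq_true_iff, redModel.ac2_isWitness hcover hAC2 hW1⟩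

/-- Suppose `X = 0` is a cause of `ψ` in the reduction model `(M_Φ, u)`,
witnessed by a partition `(Wᶜ, W)` and a setting `(x', w')` satisfying AC2,
where `W` is minimal.  Then `W ∩ B = ∅` (hence `W ⊆ A ∪ {C}`), `C ∈ W`,
every variable of `W` is set to `1` in `w'`, and the truth assignment to `A`
making exactly the variables of `W ∩ A` true is a witness for `Φ`. -/
theorem redModel_minimal_witness_structure {Var : Type} [Fintype Var]
    [DecidableEq Var]
    (A B : Finset Var) (hAB : Disjoint A B) (hcover : A ∪ B = Finset.univ)
    (φ₀ : PropForm Var)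
    (hcause : IsCause (redModel B) redCtx (Sum.inr true) 0 (redPsi B φ₀))
    (W : Set (Var ⊕ Bool)) (x' : ℤ) (w' : (Var ⊕ Bool) → ℤ)
    (hAC2 : AC2 (redModel B) redCtx (Sum.inr true) 0 (redPsi B φ₀) W x' w')
    (hmin : ∀ W₀ : Set (Var ⊕ Bool), W₀ ⊂ W →
      ¬ ∃ x'' w'', AC2 (redModel B) redCtx (Sum.inr true) 0 (redPsi B φ₀) W₀ x'' w'') :
    (∀ s ∈ B, Sum.inl s ∉ W) ∧
    (W ⊆ {Y | (∃ v ∈ A, Y = Sum.inl v) ∨ Y = Sum.inr false}) ∧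
    Sum.inr false ∈ W ∧
    (∀ Y ∈ W, w' Y = 1) ∧
    (∃ f : Var → Bool, (∀ v : Var, f v = true ↔ Sum.inl v ∈ W) ∧
      IsWitness A φ₀ f) :=
  redModel_minimal_witness_structure_general A B hcover φ₀ W x' w' hAC2 hmin
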